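/- For the amplitude damping channel with parameter γ ∈ [0,1], whose affine parameters are Λ = diag(√(1−γ), √(1−γ), 1−γ) and t = (0, 0, γ)ᵀ, the quantumness Q(ℰ) (the sum of the two smallest eigenvalues of M = (ΛΛᵀ + 5ttᵀ)/2) equals (6γ² − 3γ + 2)/2 for γ ≤ 1/6 and equals 1 − γ for γ > 1/6. -/

import Mathlib

/-!
For the amplitude damping channel `M` is already diagonal, `M = diag(a, a, b)` with
`a = (1 - γ)/2` and `b = ((1 - γ)² + 5γ²)/2`. An orthogonal conjugation preserves the
characteristic polynomial, so the ordered eigenvalues `μ` are a rearrangement of `(a, a, b)`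
and the two smallest add up to `a + min a b`. Finally `b ≤ a ↔ γ (6γ - 1) ≤ 0`, which for
`γ ≥ 0` is `γ ≤ 1/6`.
-/

open Matrix

/-- `μ` lists the eigenvalues of the real symmetric 3×3 matrix `M` in nonincreasing
order, via an orthogonal diagonalization `M = Oᵀ (diag μ) O`. -/
def EigOrdered (M : Matrix (Fin 3) (Fin 3) ℝ) (μ : Fin 3 → ℝ) : Prop :=
  (∃ O : Matrix (Fin 3) (Fin 3) ℝ, Oᵀ * O = 1 ∧ M = Oᵀ * Matrix.diagonal μ * O) ∧
  μ 1 ≤ μ 0 ∧ μ 2 ≤ μ 1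

open Polynomial

theorem Matrix.roots_charpoly_diagonal {n R : Type*} [Fintype n] [DecidableEq n]
    [CommRing R] [IsDomain R] (d : n → R) :
    (diagonal d).charpoly.roots = Finset.univ.val.map d := by
  rw [charpoly_diagonal, Finset.prod_eq_multiset_prod,
    ← roots_multiset_prod_X_sub_C (Finset.univ.val.map d), Multiset.map_map]
  rfl

theorem Matrix.map_univ_eq_of_diagonal_eq_orthogonal_conj {n R : Type*} [Fintype n]
    [DecidableEq n] [CommRing R] [IsDomain R] {d μ : n → R} {O : Matrix n n R}
    (hO : Oᵀ * O = 1) (h : diagonal d = Oᵀ * diagonal μ * O) :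
    Finset.univ.val.map d = Finset.univ.val.map μ := by
  have hroots := congrArg (fun A : Matrix n n R => A.charpoly.roots) h
  rwa [roots_charpoly_diagonal, charpoly_mul_comm, ← mul_assoc, mul_eq_one_comm.mp hO,
    one_mul, roots_charpoly_diagonal] at hroots

theorem add_eq_add_min_of_map_univ_eq {a b : ℝ} {μ : Fin 3 → ℝ}
    (h10 : μ 1 ≤ μ 0) (h21 : μ 2 ≤ μ 1)
    (h : Finset.univ.val.map μ = Finset.univ.val.map ![a, a, b]) :
    μ 1 + μ 2 = a + min a b := by
  have hmem (j : Fin 3) : μ j = a ∨ μ j = b := by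
    have : μ j ∈ Finset.univ.val.map ![a, a, b] :=
      h ▸ Multiset.mem_map_of_mem _ (Finset.mem_univ j)
    simpa using this
  have hsum : μ 0 + μ 1 + μ 2 = a + a + b := by
    simpa only [← Finset.sum_eq_multiset_sum, Fin.sum_univ_three, Matrix.cons_val_zero,
      Matrix.cons_val_one, Matrix.cons_val_two, Matrix.head_cons, Matrix.tail_cons]
      using congrArg Multiset.sum h
  rcases le_total a b with hab | hab <;> [rw [min_eq_left hab]; rw [min_eq_right hab]] <;>
    rcases hmem 0 with h0 | h0 <;> rcases hmem 1 with h1 | h1 <;>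
    rcases hmem 2 with h2 | h2 <;> linarith

theorem amplitudeDamping_matrix_eq_diagonal {γ : ℝ} (hγ : γ ≤ 1) :
    (1/2 : ℝ) • (diagonal ![√(1 - γ), √(1 - γ), 1 - γ] * (diagonal ![√(1 - γ), √(1 - γ), 1 - γ])ᵀ
      + (5 : ℝ) • vecMulVec ![0, 0, γ] ![0, 0, γ])
      = diagonal ![(1 - γ)/2, (1 - γ)/2, ((1 - γ)^2 + 5*γ^2)/2] := by
  have hsq : √(1 - γ) * √(1 - γ) = 1 - γ := Real.mul_self_sqrt (by linarith)
  rw [diagonal_transpose, diagonal_mul_diagonal]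
  ext i j
  fin_cases i <;> fin_cases j <;> simp [hsq] <;> ring

/-- The quantumness of the amplitude damping channel with parameter `γ`:
the sum of the two smallest eigenvalues of `M = (ΛΛᵀ + 5ttᵀ)/2` with
`Λ = diag(√(1−γ), √(1−γ), 1−γ)`, `t = (0,0,γ)ᵀ` equals
`(6γ² − 3γ + 2)/2` for `γ ≤ 1/6` and `1 − γ` for `γ > 1/6`. -/
theorem stmt18 (γ : ℝ) (hγ : γ ∈ Set.Icc (0 : ℝ) 1)
    (Λ : Matrix (Fin 3) (Fin 3) ℝ) (t : Fin 3 → ℝ)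
    (hΛ : Λ = Matrix.diagonal ![Real.sqrt (1-γ), Real.sqrt (1-γ), 1-γ])
    (ht : t = ![0, 0, γ])
    (μ : Fin 3 → ℝ)
    (hμ : EigOrdered ((1/2 : ℝ) • (Λ * Λᵀ + (5 : ℝ) • vecMulVec t t)) μ) :
    μ 1 + μ 2 = if γ ≤ 1/6 then (6*γ^2 - 3*γ + 2)/2 else 1 - γ := by
  obtain ⟨hγ0, hγ1⟩ := hγ
  subst hΛ ht
  obtain ⟨⟨O, hO, hM⟩, h10, h21⟩ := hμ
  rw [amplitudeDamping_matrix_eq_diagonal hγ1] at hM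
  rw [add_eq_add_min_of_map_univ_eq h10 h21
    (map_univ_eq_of_diagonal_eq_orthogonal_conj hO hM).symm]
  split_ifs with hγ6
  · rw [min_eq_right (by nlinarith)]
    ring
  · rw [min_eq_left (by nlinarith)]
    ring
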